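/- Exponential growth of the solvable horizon (part of Lemma A.2): In a deterministic goal-conditioned transition system, let (π_k)_{k∈ℕ} be a sequence of deterministic goal-conditioned policies such that (i) π₀ reaches g from s for every pair (s, g) with d(s, g) ≤ 1, and (ii) for every k ≥ 1, π_k satisfies the task-reduction update property with respect to π_{k−1}: for every pair (s, g), if there exists a state s_B such that π_{k−1} reaches s_B from s (toward goal s_B) and π_{k−1} reaches g from s_B (toward goal g), then π_k reaches g from s. Then for every k, π_k reaches g from s for every pair (s, g) with d(s, g) ≤ 2^k. -/
import Mathlib



/-- The final state after executing an action list from a state in a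
deterministic goal-conditioned transition system with transition function `t`. -/
def run {S A : Type*} (t : S → A → S) : S → List A → S
  | s, [] => s
  | s, a :: L => run t (t s a) L

/-- `gdist t s g` is the least number of steps needed to go from `s` to `g`
(`⊤` if `g` is unreachable from `s`). -/
noncomputable def gdist {S A : Type*} (t : S → A → S) (s g : S) : ℕ∞ :=
  sInf {n : ℕ∞ | ∃ L : List A, (L.length : ℕ∞) = n ∧ run t s L = g}

/-- The state reached after `n` steps of executing the deterministic
goal-conditioned policy `π` from state `s` toward goal `g`. -/
def polIter {S A : Type*} (t : S → A → S) (π : S → S → A) (g s : S) : ℕ → S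
  | 0 => s
  | n + 1 => t (polIter t π g s n) (π (polIter t π g s n) g)

/-- The policy `π` reaches goal `g` from state `s`: the rollout of `π` from `s`
toward `g` visits `g` at some step. -/
def polReaches {S A : Type*} (t : S → A → S) (π : S → S → A) (s g : S) : Prop :=
  ∃ n : ℕ, polIter t π g s n = g

lemma run_append {S A : Type*} (t : S → A → S) (L1 L2 : List A) (s : S) :
    run t s (L1 ++ L2) = run t (run t s L1) L2 := by
  induction L1 generalizing s with
  | nil => rfl
  | cons a L ih => simp [run, ih]

lemma gdist_le_of_list {S A : Type*} (t : S → A → S) (s g : S) (L : List A) (n : ℕ)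
    (hrun : run t s L = g) (hlen : L.length ≤ n) : gdist t s g ≤ (n : ℕ∞) := by
  exact le_trans (sInf_le ⟨L, rfl, hrun⟩) (by exact_mod_cast hlen)

lemma exists_list_of_gdist_le {S A : Type*} (t : S → A → S) (s g : S) (n : ℕ)
    (h : gdist t s g ≤ (n : ℕ∞)) : ∃ L : List A, L.length ≤ n ∧ run t s L = g := by
  by_contra hc
  push_neg at hc
  have h' : ((n : ℕ∞) + 1) ≤ gdist t s g := by
    apply le_sInf
    rintro m ⟨L, hL, hrun⟩
    rcases lt_or_ge n L.length with hlt | hle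
    · rw [← hL]
      exact_mod_cast hlt
    · exact absurd hrun (hc L hle)
  have : ((n : ℕ∞) + 1) ≤ (n : ℕ∞) := le_trans h' h
  rw [show ((n : ℕ∞) + 1) = ((n+1 : ℕ) : ℕ∞) by push_cast; ring] at this
  exact absurd (by exact_mod_cast this : n + 1 ≤ n) (by omega)

/-- Exponential growth of the solvable horizon: if `π 0` solves every pair with
`d(s, g) ≤ 1` and each `π k` (`k ≥ 1`) satisfies the task-reduction update property
with respect to `π (k-1)`, then `π k` solves every pair with `d(s, g) ≤ 2 ^ k`. -/
theorem exponential_horizon_growth {S A : Type*} (t : S → A → S) (π : ℕ → S → S → A)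
    (h0 : ∀ s g : S, gdist t s g ≤ (1 : ℕ∞) → polReaches t (π 0) s g)
    (hstep : ∀ k : ℕ, 1 ≤ k → ∀ s g : S,
      (∃ sB : S, polReaches t (π (k - 1)) s sB ∧ polReaches t (π (k - 1)) sB g) →
        polReaches t (π k) s g) :
    ∀ (k : ℕ) (s g : S), gdist t s g ≤ ((2 ^ k : ℕ) : ℕ∞) → polReaches t (π k) s g := by
    intro k
    induction k with
    | zero =>
      intro s g h
      exact h0 s g (by simpa using h)
    | succ k ih =>
      intro s g h
      obtain ⟨L, hlen, hrun⟩ := exists_list_of_gdist_le t s g (2 ^ (k + 1)) h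
      set sB := run t s (L.take (2 ^ k)) with hsB
      have h1 : gdist t s sB ≤ ((2 ^ k : ℕ) : ℕ∞) := by
        apply gdist_le_of_list t s sB (L.take (2 ^ k)) _ rfl
        simp [Nat.min_le_left]
      have h2 : gdist t sB g ≤ ((2 ^ k : ℕ) : ℕ∞) := by
        apply gdist_le_of_list t sB g (L.drop (2 ^ k)) _ _
        · simp only [List.length_drop]
          have : 2 ^ (k + 1) = 2 ^ k + 2 ^ k := by ring
          omega
        · rw [hsB, ← run_append, List.take_append_drop]; exact hrun
      have := hstep (k + 1) (by omega) s g ⟨sB, by simpa using ih s sB h1, by simpa using ih sB g h2⟩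
      exact this
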